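/- Let E be an evolutionary system satisfying A1, and let A ⊆ X satisfy ω_w(A) ⊆ A. Then ω_s(A) = ω_w(A). In particular ω_s(X) = ω_w(X) = A_w, and if the strong global attractor A_s exists, then A_s = A_w. -/

import Mathlib

open Set Filter Topology

/-- The topology induced by a metric structure `m` on `X`. -/
def mtop {X : Type*} (m : MetricSpace X) : TopologicalSpace X :=
  m.toPseudoMetricSpace.toUniformSpace.toTopologicalSpace

/-- An evolutionary system: for each `T : ℝ`, `E T` is the set of trajectories on `[T, ∞)`
(modeled as functions `ℝ → X`), with translation and restriction properties. -/
structure EvolSys (X : Type*) where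
  E : ℝ → Set (ℝ → X)
  nonempty : (E 0).Nonempty
  translate : ∀ T s : ℝ, E (T + s) = {u | (fun t => u (t + s)) ∈ E T}
  restrict : ∀ T T' : ℝ, T ≤ T' → E T ⊆ E T'

/-- Complete trajectories. -/
def EvolSys.Einf {X : Type*} (ES : EvolSys X) : Set (ℝ → X) := {u | ∀ T : ℝ, u ∈ ES.E T}

/-- `R t A = {u t : u 0 ∈ A, u ∈ E([0,∞))}`. -/
def EvolSys.R {X : Type*} (ES : EvolSys X) (t : ℝ) (A : Set X) : Set X :=
  {x | ∃ u ∈ ES.E 0, u 0 ∈ A ∧ u t = x}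

/-- `R̃ t A = {u t : u 0 ∈ A, u ∈ E((-∞,∞))}`. -/
def EvolSys.Rt {X : Type*} (ES : EvolSys X) (t : ℝ) (A : Set X) : Set X :=
  {x | ∃ u ∈ ES.Einf, u 0 ∈ A ∧ u t = x}

/-- The omega-limit of `A` with respect to the metric `m`. -/
def omegaLim {X : Type*} (m : MetricSpace X) (ES : EvolSys X) (A : Set X) : Set X :=
  ⋂ T ∈ Ici (0:ℝ), @closure X (mtop m) (⋃ t ∈ Ici T, ES.R t A)

/-- `P` uniformly attracts `A` in the metric `m`. -/
def attracts {X : Type*} (m : MetricSpace X) (ES : EvolSys X) (P A : Set X) : Prop :=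
  ∀ ε > (0:ℝ), ∃ t₀ : ℝ, ∀ t ≥ t₀, ∀ x ∈ ES.R t A, ∃ p ∈ P, m.dist x p < ε

/-- `P` is an attracting set in the metric `m`. -/
def isAttracting {X : Type*} (m : MetricSpace X) (ES : EvolSys X) (P : Set X) : Prop :=
  attracts m ES P univ

/-- A global attractor in metric `m`: a minimal closed attracting set. -/
def isGlobalAttractor {X : Type*} (m : MetricSpace X) (ES : EvolSys X) (A : Set X) : Prop :=
  @IsClosed X (mtop m) A ∧ isAttracting m ES A ∧
    ∀ B ⊆ A, @IsClosed X (mtop m) B → isAttracting m ES B → B = A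

/-- Asymptotic compactness with respect to the strong metric `ms`. -/
def asympCompact {X : Type*} (ms : MetricSpace X) (ES : EvolSys X) : Prop :=
  ∀ (t : ℕ → ℝ) (x : ℕ → X), Tendsto t atTop atTop →
    (∀ n, x n ∈ ES.R (t n) univ) →
    ∃ (φ : ℕ → ℕ) (y : X), StrictMono φ ∧
      Tendsto (fun n => ms.dist (x (φ n)) y) atTop (𝓝 0)

/-- Quasi-invariance of `A`: through every point of `A` passes a complete trajectory
lying in `A`. -/
def quasiInvariant {X : Type*} (ES : EvolSys X) (A : Set X) : Prop :=
  ∀ a ∈ A, ∃ u ∈ ES.Einf, u 0 = a ∧ ∀ t : ℝ, u t ∈ A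

/-- Condition A1: `E([0,∞))` is (sequentially) compact in `C([0,∞); X_w)`, i.e. every
sequence of trajectories has a subsequence converging, uniformly in `d_w` on every
compact subinterval of `[0,∞)`, to a trajectory. -/
def A1cond {X : Type*} (mw : MetricSpace X) (ES : EvolSys X) : Prop :=
  ∀ u : ℕ → ℝ → X, (∀ n, u n ∈ ES.E 0) →
    ∃ (φ : ℕ → ℕ) (v : ℝ → X), StrictMono φ ∧ v ∈ ES.E 0 ∧
      ∀ T > (0:ℝ), ∀ ε > (0:ℝ), ∃ N : ℕ, ∀ n ≥ N, ∀ s ∈ Icc (0:ℝ) T,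
        mw.dist (u (φ n) s) (v s) < ε

/-- The metric of `C([a,∞); X_w)`. -/
noncomputable def dC {X : Type*} (mw : MetricSpace X) (a : ℝ) (u v : ℝ → X) : ℝ :=
  ∑' T : ℕ, (1/2 : ℝ)^T *
    (sSup ((fun t => mw.dist (u t) (v t)) '' Icc a (a + T)) /
     (1 + sSup ((fun t => mw.dist (u t) (v t)) '' Icc a (a + T))))

/-!
Under A1 a point `x` of `ω_w(A)` lies on a trajectory at every time `s ≥ 0`: the trajectories
passing near `x` at times `τₙ → ∞`, shifted back by `τₙ - s`, have a limit trajectory `v` with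
`v s = x` and `v 0 ∈ ω_w(A) ⊆ A`. So `ω_w(A) ⊆ R(s)A` for all `s ≥ 0`, and these sets lie in
`ω_s(A)`; conversely `ω_s(A) ⊆ ω_w(A)` since `d_s`-convergence implies `d_w`-convergence.
A closed minimal attracting set is `ω(X)`: attraction puts `ω(X)` inside it, and removing a ball
around one of its points outside `ω(X)` would leave a smaller closed attracting set.
-/

namespace EvolSys

variable {X : Type*} (ES : EvolSys X)

theorem shift_mem_E_zero {u : ℝ → X} (hu : u ∈ ES.E 0) {c : ℝ} (hc : 0 ≤ c) :
    (fun σ => u (σ + c)) ∈ ES.E 0 := by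
  refine ES.restrict (0 + -c) 0 (by linarith) ?_
  rw [ES.translate 0 (-c)]
  simpa only [mem_ofPred_eq, neg_add_cancel_right] using hu

theorem R_mono {t : ℝ} {A B : Set X} (h : A ⊆ B) : ES.R t A ⊆ ES.R t B :=
  fun _ ⟨u, hu, hu0, hut⟩ => ⟨u, hu, h hu0, hut⟩

end EvolSys

section OmegaLimit

variable {X : Type*} (m : MetricSpace X) (ES : EvolSys X) {A : Set X} {x : X}

theorem mem_closure_mtop_iff {S : Set X} :
    x ∈ @closure X (mtop m) S ↔ ∀ ε > 0, ∃ y ∈ S, m.dist x y < ε :=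
  @Metric.mem_closure_iff X m.toPseudoMetricSpace S x

theorem mem_omegaLim_iff : x ∈ omegaLim m ES A ↔
    ∀ T ≥ 0, ∀ ε > 0, ∃ t ≥ T, ∃ y ∈ ES.R t A, m.dist x y < ε := by
  let _ := m
  simp only [omegaLim, mem_iInter₂, mem_Ici, mem_closure_mtop_iff, mem_iUnion, exists_prop]
  refine forall₂_congr fun T _ => forall₂_congr fun ε _ => ⟨?_, ?_⟩
  · rintro ⟨y, ⟨t, ht, hy⟩, hxy⟩
    exact ⟨t, ht, y, hy, hxy⟩
  · rintro ⟨t, ht, y, hy, hxy⟩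
    exact ⟨y, ⟨t, ht, hy⟩, hxy⟩

theorem exists_seq_of_mem_omegaLim (hx : x ∈ omegaLim m ES A) (T₀ : ℝ) :
    ∃ (τ : ℕ → ℝ) (y : ℕ → X), (∀ n, T₀ + n ≤ τ n) ∧ (∀ n, y n ∈ ES.R (τ n) A) ∧
      Tendsto (fun n => m.dist (y n) x) atTop (𝓝 0) := by
  let _ := m
  have hx' := (mem_omegaLim_iff m ES).1 hx
  choose τ hτ y hy hxy using fun n : ℕ =>
    hx' (max T₀ 0 + n) (by positivity) (1 / (n + 1)) Nat.one_div_pos_of_nat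
  refine ⟨τ, y, fun n => le_trans (by gcongr; exact le_max_left _ _) (hτ n), hy, ?_⟩
  refine squeeze_zero (fun n => dist_nonneg) (fun n => ?_) tendsto_one_div_add_atTop_nhds_zero_nat
  rw [dist_comm]
  exact (hxy n).le

theorem mem_omegaLim_of_tendsto {τ : ℕ → ℝ} {y : ℕ → X} (hτ : Tendsto τ atTop atTop)
    (hy : ∀ n, y n ∈ ES.R (τ n) A) (hlim : Tendsto (fun n => m.dist (y n) x) atTop (𝓝 0)) :
    x ∈ omegaLim m ES A := by
  let _ := m
  refine mem_iInter₂.2 fun T _ =>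
    mem_closure_of_tendsto (tendsto_iff_dist_tendsto_zero.2 hlim) ?_
  filter_upwards [hτ.eventually_ge_atTop T] with n hn
  exact mem_biUnion hn (hy n)

theorem omegaLim_univ_subset_of_isAttracting {P : Set X} (hP : @IsClosed X (mtop m) P)
    (hatt : isAttracting m ES P) : omegaLim m ES univ ⊆ P := by
  intro x hx
  let _ := m
  rw [← hP.closure_eq, mem_closure_mtop_iff]
  intro ε hε
  obtain ⟨t₀, ht₀⟩ := hatt (ε / 2) (half_pos hε)
  obtain ⟨t, ht, y, hy, hxy⟩ :=
    (mem_omegaLim_iff m ES).1 hx (max t₀ 0) (le_max_right _ _) (ε / 2) (half_pos hε)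
  obtain ⟨p, hp, hyp⟩ := ht₀ t (le_of_max_le_left ht) y hy
  exact ⟨p, hp, by linarith [dist_triangle x y p]⟩

theorem subset_omegaLim_univ_of_isGlobalAttractor {P : Set X}
    (hP : isGlobalAttractor m ES P) : P ⊆ omegaLim m ES univ := by
  obtain ⟨hclosed, hatt, hmin⟩ := hP
  intro a ha
  by_contra ha'
  let _ := m
  obtain ⟨T, -, δ, hδ, hfar⟩ : ∃ T ≥ 0, ∃ δ > 0, ∀ t ≥ T, ∀ y ∈ ES.R t univ, δ ≤ dist a y := by
    simpa [mem_omegaLim_iff] using ha'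
  set B := P ∩ {y | δ / 2 ≤ dist a y}
  have hB : @IsClosed X (mtop m) B :=
    hclosed.inter (isClosed_le continuous_const (continuous_const.dist continuous_id))
  have hattB : isAttracting m ES B := by
    intro ε hε
    obtain ⟨t₀, ht₀⟩ := hatt (min ε (δ / 2)) (lt_min hε (half_pos hδ))
    refine ⟨max t₀ T, fun t ht y hy => ?_⟩
    obtain ⟨p, hp, hyp⟩ := ht₀ t (le_of_max_le_left ht) y hy
    have hay := hfar t (le_of_max_le_right ht) y hy
    refine ⟨p, ⟨hp, ?_⟩, hyp.trans_le (min_le_left _ _)⟩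
    show δ / 2 ≤ dist a p
    linarith [dist_triangle a p y, dist_comm p y, min_le_right ε (δ / 2)]
  have haB : a ∈ B := (hmin B inter_subset_left hB hattB).symm ▸ ha
  have had := haB.2
  rw [mem_ofPred_eq, dist_self] at had
  linarith

theorem isGlobalAttractor.eq_omegaLim_univ {P : Set X} (hP : isGlobalAttractor m ES P) :
    P = omegaLim m ES univ :=
  (subset_omegaLim_univ_of_isGlobalAttractor m ES hP).antisymm
    (omegaLim_univ_subset_of_isAttracting m ES hP.1 hP.2.1)

end OmegaLimit

section WeakAndStrongOmegaLimits

variable {X : Type*} {ms mw : MetricSpace X} {ES : EvolSys X} {A : Set X}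

theorem A1cond.exists_subseq_tendsto (hA1 : A1cond mw ES) {u : ℕ → ℝ → X}
    (hu : ∀ n, u n ∈ ES.E 0) :
    ∃ (φ : ℕ → ℕ) (v : ℝ → X), StrictMono φ ∧ v ∈ ES.E 0 ∧
      ∀ σ ≥ 0, Tendsto (fun n => mw.dist (u (φ n) σ) (v σ)) atTop (𝓝 0) := by
  obtain ⟨φ, v, hφ, hv, hconv⟩ := hA1 u hu
  refine ⟨φ, v, hφ, hv, fun σ hσ => Metric.tendsto_atTop.2 fun ε hε => ?_⟩
  obtain ⟨N, hN⟩ := hconv (σ + 1) (by linarith) ε hε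
  refine ⟨N, fun n hn => ?_⟩
  rw [Real.dist_0_eq_abs, abs_of_nonneg (@dist_nonneg X mw.toPseudoMetricSpace _ _)]
  exact hN n hn σ ⟨hσ, by linarith⟩

theorem mem_R_omegaLim_of_mem_omegaLim (hA1 : A1cond mw ES) {x : X}
    (hx : x ∈ omegaLim mw ES A) {s : ℝ} (hs : 0 ≤ s) : x ∈ ES.R s (omegaLim mw ES A) := by
  let _ := mw
  obtain ⟨τ, y, hτ, hy, hlim⟩ := exists_seq_of_mem_omegaLim mw ES hx s
  choose u hu hu0 hut using hy
  set w : ℕ → ℝ → X := fun n σ => u n (σ + (τ n - s))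
  have hw : ∀ n, w n ∈ ES.E 0 := fun n =>
    ES.shift_mem_E_zero (hu n) (by linarith [hτ n, (n.cast_nonneg : (0 : ℝ) ≤ n)])
  obtain ⟨φ, v, hφ, hv, hconv⟩ := hA1.exists_subseq_tendsto hw
  refine ⟨v, hv, ?_, ?_⟩
  · have hτφ : Tendsto (fun n => τ (φ n) - s) atTop atTop := by
      refine tendsto_atTop_mono (fun n => ?_) tendsto_natCast_atTop_atTop
      have hn : (n : ℝ) ≤ φ n := by exact_mod_cast hφ.id_le n
      linarith [hτ (φ n)]
    exact mem_omegaLim_of_tendsto mw ES hτφ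
      (fun n => ⟨u (φ n), hu _, hu0 _, by simp only [w, zero_add]⟩) (hconv 0 le_rfl)
  · have hws : (fun n => w (φ n) s) = y ∘ φ := by
      funext n
      simp only [w, Function.comp, add_sub_cancel, hut]
    refine tendsto_nhds_unique (tendsto_iff_dist_tendsto_zero.2 (hconv s hs)) ?_
    rw [hws]
    exact (tendsto_iff_dist_tendsto_zero.2 hlim).comp hφ.tendsto_atTop

theorem omegaLim_subset_of_tendsto_dist
    (hsw : ∀ u v : ℕ → X,
      Tendsto (fun n => ms.dist (u n) (v n)) atTop (𝓝 0) →
      Tendsto (fun n => mw.dist (u n) (v n)) atTop (𝓝 0)) :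
    omegaLim ms ES A ⊆ omegaLim mw ES A := by
  intro x hx
  obtain ⟨τ, y, hτ, hy, hlim⟩ := exists_seq_of_mem_omegaLim ms ES hx 0
  have hτ_top : Tendsto τ atTop atTop :=
    tendsto_atTop_mono (fun n => by linarith [hτ n]) tendsto_natCast_atTop_atTop
  exact mem_omegaLim_of_tendsto mw ES hτ_top hy (hsw y (fun _ => x) hlim)

theorem omegaLim_subset_of_A1cond (hA1 : A1cond mw ES) (hAsub : omegaLim mw ES A ⊆ A) :
    omegaLim mw ES A ⊆ omegaLim ms ES A := fun _ hx =>
  mem_iInter₂.2 fun _ hT => @subset_closure X (mtop ms) _ _ <|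
    mem_biUnion self_mem_Ici (ES.R_mono hAsub (mem_R_omegaLim_of_mem_omegaLim hA1 hx hT))

end WeakAndStrongOmegaLimits

theorem stmt14_general {X : Type*} (ms mw : MetricSpace X) (ES : EvolSys X)
    (hsw : ∀ u v : ℕ → X,
      Tendsto (fun n => ms.dist (u n) (v n)) atTop (𝓝 0) →
      Tendsto (fun n => mw.dist (u n) (v n)) atTop (𝓝 0))
    (hA1 : A1cond mw ES)
    (A : Set X) (hAsub : omegaLim mw ES A ⊆ A) :
    omegaLim ms ES A = omegaLim mw ES A ∧
    omegaLim ms ES Set.univ = omegaLim mw ES Set.univ ∧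
    ∀ As : Set X, isGlobalAttractor ms ES As → As = omegaLim mw ES Set.univ := by
  have hω : ∀ {B : Set X}, omegaLim mw ES B ⊆ B → omegaLim ms ES B = omegaLim mw ES B :=
    fun hB => (omegaLim_subset_of_tendsto_dist hsw).antisymm (omegaLim_subset_of_A1cond hA1 hB)
  have hω_univ := hω (subset_univ _)
  refine ⟨hω hAsub, hω_univ, fun As hAs => ?_⟩
  rw [hAs.eq_omegaLim_univ, hω_univ]

theorem stmt14 {X : Type*} (ms mw : MetricSpace X) (ES : EvolSys X)
    (hXw : @IsCompact X (mtop mw) Set.univ)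
    (hsw : ∀ u v : ℕ → X,
      Tendsto (fun n => ms.dist (u n) (v n)) atTop (𝓝 0) →
      Tendsto (fun n => mw.dist (u n) (v n)) atTop (𝓝 0))
    (hA1 : A1cond mw ES)
    (A : Set X) (hAsub : omegaLim mw ES A ⊆ A) :
    omegaLim ms ES A = omegaLim mw ES A ∧
    omegaLim ms ES Set.univ = omegaLim mw ES Set.univ ∧
    ∀ As : Set X, isGlobalAttractor ms ES As → As = omegaLim mw ES Set.univ :=
  stmt14_general ms mw ES hsw hA1 A hAsub
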